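/- arXiv:2211.09138 — 4 statements merged into one kernel-verified Lean document; each statement's English description precedes it below -/
import Mathlib

section
/- Let V₊ be a generalized metric on (E, ⟨·,·⟩_E) and V₋ := V₊^⊥. Then for every generalized metric V'₊ on (E, ⟨·,·⟩_E) there exists a unique linear map φ₊ : V₊ → V₋ such that V'₊ is the graph of φ₊, i.e., V'₊ = { ψ + φ₊(ψ) : ψ ∈ V₊ }. -/
/-- A subspace on which the bilinear form is positive definite. -/
def IsPosDefOn {E : Type*} [AddCommGroup E] [Module ℝ E]
    (B : E →ₗ[ℝ] E →ₗ[ℝ] ℝ) (V : Submodule ℝ E) : Prop :=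
  ∀ x ∈ V, x ≠ 0 → 0 < B x x

/-- A generalized metric: a subspace on which the form is positive definite and which is
maximal with this property. -/
def IsGenMetric {E : Type*} [AddCommGroup E] [Module ℝ E]
    (B : E →ₗ[ℝ] E →ₗ[ℝ] ℝ) (V : Submodule ℝ E) : Prop :=
  IsPosDefOn B V ∧ ∀ W : Submodule ℝ E, V ≤ W → IsPosDefOn B W → W = V

/-!
A generalized metric `V` splits `E = V ⊕ V^⊥`. Any vector of another generalized metric `V'`
orthogonal to `V` would enlarge `V` to a bigger positive subspace, so `V' ∩ V^⊥ = 0`; by symmetry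
`dim V = dim V'`, hence `V'` is also a complement of `V^⊥`. A complement of `W` in `V ⊕ W` is
the graph of a unique linear map `V → W`, namely minus the projection onto `W` along it.
-/

namespace Submodule

variable {R E : Type*} [Ring R] [AddCommGroup E] [Module R E]

theorem existsUnique_linearMap_graph_eq_of_isCompl {V W U : Submodule R E}
    (hVW : IsCompl V W) (hUW : IsCompl U W) :
    ∃! φ : V →ₗ[R] W, (U : Set E) = {x | ∃ ψ : V, x = (ψ : E) + (φ ψ : E)} := by
  set φ : V →ₗ[R] W := -(projectionOnto W U hUW.symm).comp V.subtype
  have hφ (ψ : V) : (ψ : E) + φ ψ = U.projection W hUW ψ := by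
    simp [φ, projection_eq_self_sub_projection hUW]
  refine ⟨φ, Set.ext fun u ↦ ⟨fun hu ↦ ⟨projectionOnto V W hVW u, ?_⟩, ?_⟩, ?_⟩
  · rw [hφ, coe_projectionOnto_apply, projection_eq_self_sub_projection hVW.symm, map_sub,
      projection_apply_of_mem_left hUW hu,
      projection_apply_of_mem_right hUW (projection_apply_mem _ _), sub_zero]
  · rintro ⟨ψ, rfl⟩
    exact hφ ψ ▸ projection_apply_mem hUW ψ
  · intro φ' hφ'
    ext ψ
    have h₁ : (ψ : E) + φ ψ ∈ U := by rw [hφ]; exact projection_apply_mem hUW ψ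
    have h₂ : (ψ : E) + φ' ψ ∈ (U : Set E) := by rw [hφ']; exact ⟨ψ, rfl⟩
    have h : (φ' ψ : E) - φ ψ ∈ U ⊓ W :=
      ⟨by simpa using sub_mem h₂ h₁, sub_mem (φ' ψ).2 (φ ψ).2⟩
    simpa [hUW.inf_eq_bot, sub_eq_zero] using h

end Submodule

section

open LinearMap.BilinForm Module

variable {E : Type*} [AddCommGroup E] [Module ℝ E] {B : E →ₗ[ℝ] E →ₗ[ℝ] ℝ}

theorem isPosDefOn_span_singleton {x : E} (hx : 0 < B x x) :
    IsPosDefOn B (Submodule.span ℝ {x}) := by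
  rintro _ hy hy0
  obtain ⟨t, rfl⟩ := Submodule.mem_span_singleton.mp hy
  have ht : t ≠ 0 := by rintro rfl; simp at hy0
  simpa [mul_assoc] using mul_pos (mul_self_pos.mpr ht) hx

namespace IsPosDefOn

theorem nonneg {V : Submodule ℝ E} (hV : IsPosDefOn B V) {x : E} (hx : x ∈ V) : 0 ≤ B x x := by
  rcases eq_or_ne x 0 with rfl | hx0
  · simp
  · exact (hV x hx hx0).le

theorem sup_of_le_orthogonal (hsymm : ∀ x y : E, B x y = B y x) {V W : Submodule ℝ E}
    (hV : IsPosDefOn B V) (hW : IsPosDefOn B W) (hVW : W ≤ orthogonal B V) :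
    IsPosDefOn B (V ⊔ W) := by
  rintro _ hx hx0
  obtain ⟨v, hv, w, hw, rfl⟩ := Submodule.mem_sup.mp hx
  have hvw : B v w = 0 := hVW hw v hv
  have hwv : B w v = 0 := by rw [hsymm, hvw]
  have hsum : B (v + w) (v + w) = B v v + B w w := by simp [hvw, hwv]
  rw [hsum]
  rcases eq_or_ne v 0 with rfl | hv0
  · simpa using hW w hw (by simpa using hx0)
  · exact add_pos_of_pos_of_nonneg (hV v hv hv0) (hW.nonneg hw)

theorem disjoint_orthogonal {V : Submodule ℝ E} (hV : IsPosDefOn B V) :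
    Disjoint V (orthogonal B V) := by
  refine Submodule.disjoint_def.mpr fun x hx hx' ↦ ?_
  by_contra hx0
  exact (hV x hx hx0).ne' (hx' x hx)

theorem isCompl_orthogonal [FiniteDimensional ℝ E] (hsymm : ∀ x y : E, B x y = B y x)
    {V : Submodule ℝ E} (hV : IsPosDefOn B V) : IsCompl V (orthogonal B V) :=
  (isCompl_orthogonal_iff_disjoint fun x y h ↦ hsymm x y ▸ h).mpr hV.disjoint_orthogonal

end IsPosDefOn

namespace IsGenMetric

variable {V U : Submodule ℝ E}

theorem disjoint_orthogonal (hsymm : ∀ x y : E, B x y = B y x) (hV : IsGenMetric B V)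
    (hU : IsPosDefOn B U) : Disjoint U (orthogonal B V) := by
  refine Submodule.disjoint_def.mpr fun x hx hx' ↦ ?_
  by_contra hx0
  have hxx : 0 < B x x := hU x hx hx0
  have hsup : V ⊔ Submodule.span ℝ {x} = V :=
    hV.2 _ le_sup_left <| hV.1.sup_of_le_orthogonal hsymm (isPosDefOn_span_singleton hxx)
      ((Submodule.span_singleton_le_iff_mem _ _).mpr hx')
  have hxV : x ∈ V := hsup ▸ Submodule.mem_sup_right (Submodule.mem_span_singleton_self x)
  exact hxx.ne' (hx' x hxV)

theorem finrank_le [FiniteDimensional ℝ E] (hsymm : ∀ x y : E, B x y = B y x)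
    (hV : IsGenMetric B V) (hU : IsPosDefOn B U) : finrank ℝ U ≤ finrank ℝ V := by
  have := Submodule.finrank_add_finrank_le_of_disjoint (hV.disjoint_orthogonal hsymm hU)
  rw [← Submodule.finrank_add_eq_of_isCompl (hV.1.isCompl_orthogonal hsymm)] at this
  omega

theorem isCompl_orthogonal [FiniteDimensional ℝ E] (hsymm : ∀ x y : E, B x y = B y x)
    (hV : IsGenMetric B V) (hU : IsGenMetric B U) : IsCompl U (orthogonal B V) := by
  refine (Submodule.isCompl_iff_disjoint _ _ ?_).mpr (hV.disjoint_orthogonal hsymm hU.1)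
  rw [← Submodule.finrank_add_eq_of_isCompl (hV.1.isCompl_orthogonal hsymm)]
  exact Nat.add_le_add_right (hU.finrank_le hsymm hV.1) _

end IsGenMetric

end

theorem genMetric_graph_general
    {E : Type*} [AddCommGroup E] [Module ℝ E] [FiniteDimensional ℝ E]
    (B : E →ₗ[ℝ] E →ₗ[ℝ] ℝ)
    (hsymm : ∀ x y : E, B x y = B y x)
    (Vp : Submodule ℝ E) (hVp : IsGenMetric B Vp)
    (Vp' : Submodule ℝ E) (hVp' : IsGenMetric B Vp') :
    ∃! φ : Vp →ₗ[ℝ] (LinearMap.BilinForm.orthogonal B Vp),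
      (Vp' : Set E) = { x : E | ∃ ψ : Vp, x = (ψ : E) + (φ ψ : E) } :=
  Submodule.existsUnique_linearMap_graph_eq_of_isCompl (hVp.1.isCompl_orthogonal hsymm)
    (hVp.isCompl_orthogonal hsymm hVp')

/-- Every generalized metric `V'₊` is the graph of a unique linear map
`φ₊ : V₊ → V₋`, where `V₋ = V₊^⊥`. -/
theorem genMetric_graph
    {E : Type*} [AddCommGroup E] [Module ℝ E] [FiniteDimensional ℝ E]
    (B : E →ₗ[ℝ] E →ₗ[ℝ] ℝ)
    (hsymm : ∀ x y : E, B x y = B y x)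
    (hnondeg : ∀ x : E, (∀ y : E, B x y = 0) → x = 0)
    (Vp : Submodule ℝ E) (hVp : IsGenMetric B Vp)
    (Vp' : Submodule ℝ E) (hVp' : IsGenMetric B Vp') :
    ∃! φ : Vp →ₗ[ℝ] (LinearMap.BilinForm.orthogonal B Vp),
      (Vp' : Set E) = { x : E | ∃ ψ : Vp, x = (ψ : E) + (φ ψ : E) } :=
  genMetric_graph_general B hsymm Vp hVp Vp' hVp'
end

section
/- Let V₊ be a generalized metric on (E, ⟨·,·⟩_E), V₋ := V₊^⊥, and let φ₊ : V₊ → V₋ be an arbitrary linear map. Then there exists ε₀ > 0 such that for every ε ∈ ℝ with |ε| < ε₀, the graph { ψ + ε·φ₊(ψ) : ψ ∈ V₊ } is again a generalized metric on (E, ⟨·,·⟩_E). -/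
/-!
Positive definiteness of `B` on `V₊` makes `E = V₊ ⊕ V₊^⊥`, and maximality forces `B ≤ 0` on
`V₊^⊥`. For `ψ ∈ V₊` we have `B(ψ + εφψ) = B(ψ) + ε² B(φψ)`, and since `B` is an inner product on
the finite-dimensional space `V₊`, `-B(φψ) ≤ C B(ψ)` for some `C`; so the graph is positive definite
once `ε² C < 1`. It then has the dimension of `V₊`, which is `dim E - dim V₊^⊥`, the largest
possible dimension of a subspace meeting `V₊^⊥` trivially; hence it is maximal.
-/

open LinearMap LinearMap.BilinForm Module

lemma LinearMap.exists_apply_self_le_mul_norm_sq {F : Type*} [NormedAddCommGroup F]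
    [NormedSpace ℝ F] [FiniteDimensional ℝ F] (Q : F →ₗ[ℝ] F →ₗ[ℝ] ℝ) :
    ∃ C, 0 ≤ C ∧ ∀ x, Q x x ≤ C * ‖x‖ ^ 2 := by
  let Q' : F →L[ℝ] F →L[ℝ] ℝ := toContinuousLinearMap (toContinuousLinearMap.toLinearMap ∘ₗ Q)
  refine ⟨‖Q'‖, Q'.opNorm_nonneg, fun x => ?_⟩
  calc Q x x ≤ ‖Q' x x‖ := le_abs_self _
    _ ≤ ‖Q'‖ * ‖x‖ * ‖x‖ := Q'.le_opNorm₂ x x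
    _ = ‖Q'‖ * ‖x‖ ^ 2 := by ring

lemma LinearMap.exists_apply_self_le_mul_of_pos {F : Type*} [AddCommGroup F] [Module ℝ F]
    [FiniteDimensional ℝ F] (P Q : F →ₗ[ℝ] F →ₗ[ℝ] ℝ) (hP : ∀ x y, P x y = P y x)
    (hPpos : ∀ x, x ≠ 0 → 0 < P x x) :
    ∃ C, 0 ≤ C ∧ ∀ x, Q x x ≤ C * P x x := by
  let core : InnerProductSpace.Core ℝ F :=
    { inner x y := P x y
      conj_inner_symm x y := hP y x
      re_inner_nonneg x := by
        rcases eq_or_ne x 0 with rfl | hx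
        · simp
        · exact (hPpos x hx).le
      add_left := by simp
      smul_left := by simp
      definite x h := by_contra fun hx => (hPpos x hx).ne' h }
  let _ : NormedAddCommGroup F := core.toNormedAddCommGroup
  let _ : InnerProductSpace ℝ F := InnerProductSpace.ofCore core.toCore
  obtain ⟨C, hC, hQ⟩ := Q.exists_apply_self_le_mul_norm_sq
  exact ⟨C, hC, fun x => (hQ x).trans_eq (by rw [← real_inner_self_eq_norm_sq]; rfl)⟩

section
variable {E : Type*} [AddCommGroup E] [Module ℝ E] {B : E →ₗ[ℝ] E →ₗ[ℝ] ℝ}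
  {V W N : Submodule ℝ E}

lemma apply_add_add_eq_of_mem_orthogonal (hsymm : ∀ x y, B x y = B y x) {x y : E} (hx : x ∈ V)
    (hy : y ∈ BilinForm.orthogonal B V) : B (x + y) (x + y) = B x x + B y y := by
  have hxy : B x y = 0 := hy x hx
  have hyx : B y x = 0 := by rw [hsymm, hxy]
  simp only [map_add, LinearMap.add_apply, hxy, hyx]
  ring

lemma IsPosDefOn.disjoint_orthogonal_s5 (hV : IsPosDefOn B V) :
    Disjoint V (BilinForm.orthogonal B V) := by
  refine Submodule.disjoint_def.2 fun x hxV hxV' => ?_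
  by_contra hx
  exact (hV x hxV hx).ne' (hxV' x hxV)

lemma IsPosDefOn.isCompl_orthogonal_s5 [FiniteDimensional ℝ E] (hB : B.IsRefl)
    (hV : IsPosDefOn B V) : IsCompl V (BilinForm.orthogonal B V) :=
  (restrict_nondegenerate_iff_isCompl_orthogonal hB).1
    (B.nondegenerate_restrict_of_disjoint_orthogonal hB hV.disjoint_orthogonal_s5)

lemma IsPosDefOn.sup_span_singleton (hsymm : ∀ x y, B x y = B y x) (hV : IsPosDefOn B V)
    {x : E} (hx : x ∈ BilinForm.orthogonal B V) (hxx : 0 < B x x) :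
    IsPosDefOn B (V ⊔ ℝ ∙ x) := by
  rintro _ hz hz0
  obtain ⟨v, hv, _, ht, rfl⟩ := Submodule.mem_sup.1 hz
  obtain ⟨t, rfl⟩ := Submodule.mem_span_singleton.1 ht
  rw [apply_add_add_eq_of_mem_orthogonal hsymm hv (Submodule.smul_mem _ t hx)]
  simp only [map_smul, LinearMap.smul_apply, smul_eq_mul]
  rcases eq_or_ne v 0 with rfl | hv0
  · have ht0 : t ≠ 0 := by rintro rfl; simp at hz0
    simpa [mul_assoc] using mul_pos (mul_self_pos.2 ht0) hxx
  · nlinarith [hV v hv hv0, mul_self_nonneg t]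

lemma IsGenMetric.apply_self_nonpos_of_mem_orthogonal (hsymm : ∀ x y, B x y = B y x)
    (hV : IsGenMetric B V) {x : E} (hx : x ∈ BilinForm.orthogonal B V) : B x x ≤ 0 := by
  by_contra! hxx
  have hxV : x ∈ V := by
    rw [← hV.2 _ le_sup_left (hV.1.sup_span_singleton hsymm hx hxx)]
    exact Submodule.mem_sup_right (Submodule.mem_span_singleton_self x)
  exact hxx.ne' (hx x hxV)

lemma IsPosDefOn.finrank_add_finrank_le [FiniteDimensional ℝ E] (hW : IsPosDefOn B W)
    (hN : ∀ x ∈ N, B x x ≤ 0) : finrank ℝ W + finrank ℝ N ≤ finrank ℝ E := by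
  refine Submodule.finrank_add_finrank_le_of_disjoint <|
    Submodule.disjoint_def.2 fun x hxW hxN => ?_
  by_contra hx
  exact (hW x hxW hx).not_ge (hN x hxN)

lemma IsPosDefOn.isGenMetric_of_finrank_add_eq [FiniteDimensional ℝ E] (hV : IsPosDefOn B V)
    (hN : ∀ x ∈ N, B x x ≤ 0) (hdim : finrank ℝ V + finrank ℝ N = finrank ℝ E) :
    IsGenMetric B V :=
  ⟨hV, fun W hVW hW =>
    (Submodule.eq_of_le_of_finrank_le hVW (by linarith [hW.finrank_add_finrank_le hN])).symm⟩

variable {F : Type*} [AddCommGroup F] [Module ℝ F] {f : F →ₗ[ℝ] E}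

lemma isPosDefOn_range_of_pos (hf : ∀ x, x ≠ 0 → 0 < B (f x) (f x)) :
    IsPosDefOn B (range f) := by
  rintro _ ⟨x, rfl⟩ hfx
  exact hf x (by rintro rfl; simp at hfx)

lemma finrank_range_of_pos [FiniteDimensional ℝ F] (hf : ∀ x, x ≠ 0 → 0 < B (f x) (f x)) :
    finrank ℝ (range f) = finrank ℝ F := by
  refine finrank_range_of_inj ((injective_iff_map_eq_zero f).2 fun x hfx => ?_)
  by_contra hx
  simpa [hfx] using hf x hx

end

theorem genMetric_graph_perturbation_general
    {E : Type*} [AddCommGroup E] [Module ℝ E] [FiniteDimensional ℝ E]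
    (B : E →ₗ[ℝ] E →ₗ[ℝ] ℝ)
    (hsymm : ∀ x y : E, B x y = B y x)
    (Vp : Submodule ℝ E) (hVp : IsGenMetric B Vp)
    (φ : Vp →ₗ[ℝ] (LinearMap.BilinForm.orthogonal B Vp)) :
    ∃ ε₀ > (0 : ℝ), ∀ ε : ℝ, |ε| < ε₀ →
      IsGenMetric B (LinearMap.range
        (Vp.subtype + ε • ((LinearMap.BilinForm.orthogonal B Vp).subtype ∘ₗ φ))) := by
  set g : Vp →ₗ[ℝ] E := (BilinForm.orthogonal B Vp).subtype ∘ₗ φ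
  obtain ⟨C, hC, hdom⟩ := exists_apply_self_le_mul_of_pos (B.compl₁₂ Vp.subtype Vp.subtype)
    (-B.compl₁₂ g g) (fun _ _ => hsymm _ _) fun x hx => hVp.1 x x.2 (by simpa using hx)
  refine ⟨(C + 1)⁻¹, by positivity, fun ε hε => ?_⟩
  have hεC : ε ^ 2 * C < 1 := by
    have h1 : |ε| * (C + 1) < 1 := (lt_mul_inv_iff₀ (by positivity)).1 (by rwa [one_mul])
    nlinarith [abs_nonneg ε, sq_abs ε]
  have hpos (ψ : Vp) (hψ : ψ ≠ 0) :
      0 < B ((Vp.subtype + ε • g) ψ) ((Vp.subtype + ε • g) ψ) := by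
    have hψ' : 0 < B ψ ψ := hVp.1 ψ ψ.2 (by simpa using hψ)
    have hgψ : -B (φ ψ) (φ ψ) ≤ C * B ψ ψ := hdom ψ
    have hgraph : (Vp.subtype + ε • g) ψ = (ψ : E) + ε • (φ ψ : E) := rfl
    rw [hgraph, apply_add_add_eq_of_mem_orthogonal hsymm ψ.2 (Submodule.smul_mem _ ε (φ ψ).2)]
    simp only [map_smul, LinearMap.smul_apply, smul_eq_mul]
    nlinarith
  have hrefl : B.IsRefl := fun x y h => (hsymm y x).trans h
  refine (isPosDefOn_range_of_pos hpos).isGenMetric_of_finrank_add_eq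
    (fun x hx => hVp.apply_self_nonpos_of_mem_orthogonal hsymm hx) ?_
  rw [finrank_range_of_pos hpos]
  exact Submodule.finrank_add_eq_of_isCompl (hVp.1.isCompl_orthogonal_s5 hrefl)

/-- For a generalized metric `V₊` and any linear map `φ₊ : V₊ → V₋`,
there is `ε₀ > 0` such that for all `|ε| < ε₀` the graph `{ψ + ε·φ₊(ψ) : ψ ∈ V₊}`
is again a generalized metric. -/
theorem genMetric_graph_perturbation
    {E : Type*} [AddCommGroup E] [Module ℝ E] [FiniteDimensional ℝ E]
    (B : E →ₗ[ℝ] E →ₗ[ℝ] ℝ)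
    (hsymm : ∀ x y : E, B x y = B y x)
    (hnondeg : ∀ x : E, (∀ y : E, B x y = 0) → x = 0)
    (Vp : Submodule ℝ E) (hVp : IsGenMetric B Vp)
    (φ : Vp →ₗ[ℝ] (LinearMap.BilinForm.orthogonal B Vp)) :
    ∃ ε₀ > (0 : ℝ), ∀ ε : ℝ, |ε| < ε₀ →
      IsGenMetric B (LinearMap.range
        (Vp.subtype + ε • ((LinearMap.BilinForm.orthogonal B Vp).subtype ∘ₗ φ))) :=
  genMetric_graph_perturbation_general B hsymm Vp hVp φ
end

section
/- A subspace V₊ ⊆ E = V ⊕ V* is a generalized metric if and only if there exist a positive-definite symmetric bilinear form g on V and an antisymmetric bilinear form B on V such that V₊ = { (X, g(X,·) + B(X,·)) : X ∈ V }. Moreover, the pair (g, B) is uniquely determined by V₊, and the orthogonal complement is then V₋ = V₊^⊥ = { (X, −g(X,·) + B(X,·)) : X ∈ V }. -/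
/-- The canonical symmetric pairing `⟨(X,ξ),(Y,η)⟩ = η(X) + ξ(Y)` on `V ⊕ V*`. -/
def canonPairing (V : Type*) [AddCommGroup V] [Module ℝ V] :
    (V × Module.Dual ℝ V) →ₗ[ℝ] (V × Module.Dual ℝ V) →ₗ[ℝ] ℝ :=
  LinearMap.mk₂ ℝ (fun p q => q.2 p.1 + p.2 q.1)
    (by intro p p' q; simp; ring)
    (by intro c p q; simp; ring)
    (by intro p q q'; simp; ring)
    (by intro c p q; simp; ring)

/-
A positive subspace `W` of `V ⊕ V*` meets `0 ⊕ V*` trivially, because `⟨(0, ξ), (0, ξ)⟩ = 0`;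
so it is the graph of a linear map over its projection to `V`. If that projection missed some
`X₀`, extend `p.1 ↦ -p.2 X₀` (well defined on the projection) to a functional `ξ₀` with
`ξ₀ X₀ = 1`: then `(X₀, ξ₀)` is orthogonal to `W` and has positive square, so `W` was not maximal.
Hence a generalized metric is the graph of some `γ : V → V*` with `γ X X > 0`, and `g`, `B` are
the symmetric and skew parts of `γ`. The orthogonal complement of the graph of `γ` is the graph
of `-γᵀ`, which for `γ = g + B` is `-g + B`.
-/

section Graph

variable {R M N : Type*} [Semiring R] [AddCommMonoid M] [AddCommMonoid N] [Module R M]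
  [Module R N]

lemma LinearMap.coe_graph (f : M →ₗ[R] N) :
    (f.graph : Set (M × N)) = {p | ∃ x, p = (x, f x)} := by
  ext ⟨x, y⟩
  simp

lemma LinearMap.coe_eq_iff_eq_graph (f : M →ₗ[R] N) {W : Submodule R (M × N)} :
    (W : Set (M × N)) = {p | ∃ x, p = (x, f x)} ↔ W = f.graph := by
  rw [← f.coe_graph, SetLike.coe_set_eq]

lemma LinearMap.graph_inj {f f' : M →ₗ[R] N} : f.graph = f'.graph ↔ f = f' :=
  ⟨fun h => LinearMap.ext fun x => (h ▸ rfl : (x, f x) ∈ f'.graph), fun h => h ▸ rfl⟩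

end Graph

lemma LinearMap.exists_dual_comp_eq_and_apply_eq {K M V : Type*} [Field K] [AddCommGroup M]
    [Module K M] [AddCommGroup V] [Module K V] (i : M →ₗ[K] V) (hi : Function.Injective i)
    {x : V} (hx : ∀ m, i m ≠ x) (f : M →ₗ[K] K) (c : K) :
    ∃ ξ : Module.Dual K V, ξ ∘ₗ i = f ∧ ξ x = c := by
  have hx0 : x ≠ 0 := fun h => hx 0 (by rw [map_zero, h])
  have hj : Function.Injective (i.coprod (LinearMap.toSpanSingleton K V x)) := by
    rw [← LinearMap.ker_eq_bot, LinearMap.ker_coprod_of_disjoint_range, LinearMap.ker_eq_bot.2 hi,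
      LinearMap.ker_toSpanSingleton K hx0, Submodule.prod_bot]
    rw [LinearMap.range_toSpanSingleton, Submodule.disjoint_span_singleton' hx0]
    rintro ⟨m, rfl⟩
    exact hx m rfl
  obtain ⟨ξ, hξ⟩ := LinearMap.dualMap_surjective_of_injective hj (f.coprod (c • LinearMap.id))
  refine ⟨ξ, LinearMap.ext fun m => ?_, ?_⟩
  · simpa using LinearMap.congr_fun hξ (m, 0)
  · simpa using LinearMap.congr_fun hξ (0, 1)

lemma LinearMap.neg_flip_add_eq {R M : Type*} [CommRing R] [AddCommGroup M] [Module R M]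
    {g B : M →ₗ[R] M →ₗ[R] R} (hg : ∀ x y, g x y = g y x) (hB : ∀ x y, B x y = - B y x) :
    -(g + B).flip = -g + B := by
  ext x y
  simp [hg y x, hB y x, add_comm]

section SymmSkew

variable {K M : Type*} [Field K] [AddCommGroup M] [Module K M]

def LinearMap.symmPart (γ : M →ₗ[K] M →ₗ[K] K) : M →ₗ[K] M →ₗ[K] K := (2⁻¹ : K) • (γ + γ.flip)

def LinearMap.skewPart (γ : M →ₗ[K] M →ₗ[K] K) : M →ₗ[K] M →ₗ[K] K := (2⁻¹ : K) • (γ - γ.flip)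

lemma LinearMap.symmPart_apply_comm (γ : M →ₗ[K] M →ₗ[K] K) (x y : M) :
    γ.symmPart x y = γ.symmPart y x := by
  simp [symmPart, add_comm]

lemma LinearMap.skewPart_apply_comm (γ : M →ₗ[K] M →ₗ[K] K) (x y : M) :
    γ.skewPart x y = - γ.skewPart y x := by
  simp only [skewPart, smul_apply, sub_apply, flip_apply, smul_eq_mul]
  ring

variable [NeZero (2 : K)]

lemma LinearMap.symmPart_apply_self (γ : M →ₗ[K] M →ₗ[K] K) (x : M) :
    γ.symmPart x x = γ x x := by
  simp only [symmPart, smul_apply, add_apply, flip_apply, smul_eq_mul]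
  field_simp
  ring

lemma LinearMap.symmPart_add_skewPart (γ : M →ₗ[K] M →ₗ[K] K) :
    γ.symmPart + γ.skewPart = γ := by
  ext x y
  simp only [symmPart, skewPart, add_apply, smul_apply, sub_apply, flip_apply, smul_eq_mul]
  field_simp
  ring

lemma LinearMap.symmPart_add_eq {g B : M →ₗ[K] M →ₗ[K] K} (hg : ∀ x y, g x y = g y x)
    (hB : ∀ x y, B x y = - B y x) : (g + B).symmPart = g := by
  ext x y
  simp only [symmPart, smul_apply, add_apply, flip_apply, smul_eq_mul, hg y x, hB y x]
  field_simp
  ring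

lemma LinearMap.skewPart_add_eq {g B : M →ₗ[K] M →ₗ[K] K} (hg : ∀ x y, g x y = g y x)
    (hB : ∀ x y, B x y = - B y x) : (g + B).skewPart = B := by
  ext x y
  simp only [skewPart, smul_apply, sub_apply, add_apply, flip_apply, smul_eq_mul, hg y x, hB y x]
  field_simp
  ring

end SymmSkew

section PosDef

variable {E : Type*} [AddCommGroup E] [Module ℝ E] {B : LinearMap.BilinForm ℝ E}
  {W : Submodule ℝ E}

lemma IsPosDefOn.nonneg_s6 (hW : IsPosDefOn B W) {w : E} (hw : w ∈ W) : 0 ≤ B w w := by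
  rcases eq_or_ne w 0 with rfl | hw0
  · simp
  · exact (hW w hw hw0).le

lemma IsPosDefOn.sup_span_singleton_s6 (hB : B.IsSymm) (hW : IsPosDefOn B W) {v : E}
    (hvW : v ∈ B.orthogonal W) (hv : 0 < B v v) : IsPosDefOn B (W ⊔ ℝ ∙ v) := by
  rintro _ hx hx0
  obtain ⟨w, hw, _, ht, rfl⟩ := Submodule.mem_sup.1 hx
  obtain ⟨t, rfl⟩ := Submodule.mem_span_singleton.1 ht
  have hwv : B w v = 0 := hvW w hw
  have hvw : B v w = 0 := by rw [← hB.eq, hwv]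
  have hexp : B (w + t • v) (w + t • v) = B w w + t ^ 2 * B v v := by
    simp only [map_add, map_smul, LinearMap.add_apply, LinearMap.smul_apply, hwv, hvw,
      smul_eq_mul]
    ring
  rw [hexp]
  rcases eq_or_ne t 0 with rfl | ht0
  · simp only [zero_smul, add_zero] at hx0 ⊢
    simpa using hW w hw hx0
  · have := hW.nonneg_s6 hw
    positivity

end PosDef

section CanonPairing

variable {V : Type*} [AddCommGroup V] [Module ℝ V] {W : Submodule ℝ (V × Module.Dual ℝ V)}

lemma canonPairing_apply (p q : V × Module.Dual ℝ V) :
    canonPairing V p q = q.2 p.1 + p.2 q.1 := rfl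

lemma canonPairing_self (p : V × Module.Dual ℝ V) : canonPairing V p p = 2 * p.2 p.1 := by
  rw [canonPairing_apply, two_mul]

lemma canonPairing_isSymm : LinearMap.BilinForm.IsSymm (canonPairing V) :=
  ⟨fun p q => by rw [canonPairing_apply, canonPairing_apply, add_comm]⟩

lemma orthogonal_canonPairing_graph (γ : V →ₗ[ℝ] Module.Dual ℝ V) :
    LinearMap.BilinForm.orthogonal (canonPairing V) γ.graph = (-γ.flip).graph := by
  ext ⟨X, ξ⟩
  simp only [LinearMap.BilinForm.mem_orthogonal_iff, LinearMap.mem_graph_iff, canonPairing_apply]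
  constructor
  · intro h
    ext Y
    simpa [eq_neg_iff_add_eq_zero] using h (Y, γ Y) rfl
  · rintro rfl ⟨Y, η⟩ (rfl : η = γ Y)
    simp

lemma IsPosDefOn.eq_zero_of_fst_eq_zero (hW : IsPosDefOn (canonPairing V) W) {p}
    (hp : p ∈ W) (hp1 : p.1 = 0) : p = 0 := by
  by_contra hp0
  have := hW p hp hp0
  simp_all [canonPairing_self]

lemma IsPosDefOn.injective_fst (hW : IsPosDefOn (canonPairing V) W) :
    Function.Injective (Prod.fst ∘ W.subtype) := fun p q hpq => by
  have := hW.eq_zero_of_fst_eq_zero (W.sub_mem p.2 q.2) (by simpa [sub_eq_zero] using hpq)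
  exact Subtype.ext (sub_eq_zero.1 this)

lemma IsGenMetric.surjective_fst (h : IsGenMetric (canonPairing V) W) :
    Function.Surjective (Prod.fst ∘ W.subtype) := by
  intro X₀
  by_contra hX₀
  let π := (LinearMap.fst ℝ V (Module.Dual ℝ V)).domRestrict W
  obtain ⟨ξ₀, hξ₀W, hξ₀X₀⟩ := LinearMap.exists_dual_comp_eq_and_apply_eq π
    h.1.injective_fst (fun p hp => hX₀ ⟨p, hp⟩)
    (-(Module.Dual.eval ℝ V X₀ ∘ₗ LinearMap.snd ℝ V _ ∘ₗ W.subtype)) 1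
  have horth : (X₀, ξ₀) ∈ LinearMap.BilinForm.orthogonal (canonPairing V) W := fun p hp => by
    have hξ₀p : ξ₀ p.1 = -p.2 X₀ := LinearMap.congr_fun hξ₀W ⟨p, hp⟩
    rw [canonPairing_apply, hξ₀p, neg_add_cancel]
  have hpos : 0 < canonPairing V (X₀, ξ₀) (X₀, ξ₀) := by
    rw [canonPairing_self, hξ₀X₀]
    norm_num
  have hW := h.2 _ le_sup_left (h.1.sup_span_singleton_s6 canonPairing_isSymm horth hpos)
  have hmem : (X₀, ξ₀) ∈ W := hW ▸ Submodule.mem_sup_right (Submodule.mem_span_singleton_self _)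
  exact hX₀ ⟨⟨_, hmem⟩, rfl⟩

lemma IsGenMetric.exists_eq_graph (h : IsGenMetric (canonPairing V) W) :
    ∃ γ : V →ₗ[ℝ] Module.Dual ℝ V, W = γ.graph ∧ ∀ X, X ≠ 0 → 0 < γ X X := by
  obtain ⟨γ, rfl⟩ := Submodule.exists_eq_graph ⟨h.1.injective_fst, h.surjective_fst⟩
  refine ⟨γ, rfl, fun X hX => ?_⟩
  have := h.1 (X, γ X) rfl (by simp [hX])
  rw [canonPairing_self] at this
  linarith

lemma IsGenMetric.exists_eq_graph_add (h : IsGenMetric (canonPairing V) W) :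
    ∃ g B : V →ₗ[ℝ] V →ₗ[ℝ] ℝ, (∀ X Y, g X Y = g Y X) ∧ (∀ X, X ≠ 0 → 0 < g X X) ∧
      (∀ X Y, B X Y = - B Y X) ∧ W = (g + B).graph := by
  obtain ⟨γ, rfl, hγ⟩ := h.exists_eq_graph
  refine ⟨γ.symmPart, γ.skewPart, γ.symmPart_apply_comm, fun X hX => ?_, γ.skewPart_apply_comm,
    by rw [γ.symmPart_add_skewPart]⟩
  rw [γ.symmPart_apply_self]
  exact hγ X hX

lemma isGenMetric_graph {γ : V →ₗ[ℝ] Module.Dual ℝ V} (hγ : ∀ X, X ≠ 0 → 0 < γ X X) :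
    IsGenMetric (canonPairing V) γ.graph := by
  have hpos : IsPosDefOn (canonPairing V) γ.graph := by
    rintro ⟨X, _⟩ (rfl : _ = γ X) hp
    rw [canonPairing_self]
    have := hγ X (by rintro rfl; simp at hp)
    positivity
  refine ⟨hpos, fun W hle hW => le_antisymm (fun w hw => ?_) hle⟩
  have hγw : (w.1, γ w.1) ∈ γ.graph := rfl
  have := hW.eq_zero_of_fst_eq_zero (W.sub_mem hw (hle hγw)) (by simp)
  rwa [sub_eq_zero.1 this]

lemma isGenMetric_graph_add {g B : V →ₗ[ℝ] V →ₗ[ℝ] ℝ} (hgpos : ∀ X, X ≠ 0 → 0 < g X X)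
    (hB : ∀ X Y, B X Y = - B Y X) : IsGenMetric (canonPairing V) (g + B).graph :=
  isGenMetric_graph fun X hX => by
    have hBX : B X X = 0 := by linarith [hB X X]
    simpa [hBX] using hgpos X hX

end CanonPairing

theorem genMetric_on_double_iff_general
    {V : Type*} [AddCommGroup V] [Module ℝ V]
    (Vp : Submodule ℝ (V × Module.Dual ℝ V)) :
    (IsGenMetric (canonPairing V) Vp ↔
      ∃ g Bf : V →ₗ[ℝ] V →ₗ[ℝ] ℝ,
        (∀ X Y : V, g X Y = g Y X) ∧ (∀ X : V, X ≠ 0 → 0 < g X X) ∧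
        (∀ X Y : V, Bf X Y = - Bf Y X) ∧
        (Vp : Set (V × Module.Dual ℝ V)) = { p | ∃ X : V, p = (X, g X + Bf X) }) ∧
    (IsGenMetric (canonPairing V) Vp →
      ∃! gB : (V →ₗ[ℝ] V →ₗ[ℝ] ℝ) × (V →ₗ[ℝ] V →ₗ[ℝ] ℝ),
        (∀ X Y : V, gB.1 X Y = gB.1 Y X) ∧ (∀ X : V, X ≠ 0 → 0 < gB.1 X X) ∧
        (∀ X Y : V, gB.2 X Y = - gB.2 Y X) ∧
        (Vp : Set (V × Module.Dual ℝ V)) = { p | ∃ X : V, p = (X, gB.1 X + gB.2 X) }) ∧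
    (∀ g Bf : V →ₗ[ℝ] V →ₗ[ℝ] ℝ,
      (∀ X Y : V, g X Y = g Y X) → (∀ X : V, X ≠ 0 → 0 < g X X) →
      (∀ X Y : V, Bf X Y = - Bf Y X) →
      (Vp : Set (V × Module.Dual ℝ V)) = { p | ∃ X : V, p = (X, g X + Bf X) } →
      ((LinearMap.BilinForm.orthogonal (canonPairing V) Vp : Submodule ℝ _) : Set (V × Module.Dual ℝ V))
        = { p | ∃ X : V, p = (X, - g X + Bf X) }) := by
  have hset (g Bf : V →ₗ[ℝ] V →ₗ[ℝ] ℝ) :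
      (Vp : Set (V × Module.Dual ℝ V)) = {p | ∃ X, p = (X, g X + Bf X)} ↔
        Vp = (g + Bf).graph :=
    (g + Bf).coe_eq_iff_eq_graph
  refine ⟨⟨fun h => ?_, fun ⟨g, Bf, _, hgpos, hBf, hVp⟩ => ?_⟩, fun h => ?_, ?_⟩
  · obtain ⟨g, Bf, hg, hgpos, hBf, hVp⟩ := h.exists_eq_graph_add
    exact ⟨g, Bf, hg, hgpos, hBf, (hset g Bf).2 hVp⟩
  · rw [(hset g Bf).1 hVp]
    exact isGenMetric_graph_add hgpos hBf
  · obtain ⟨g, Bf, hg, hgpos, hBf, hVp⟩ := h.exists_eq_graph_add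
    refine ⟨(g, Bf), ⟨hg, hgpos, hBf, (hset g Bf).2 hVp⟩,
      fun ⟨g', Bf'⟩ ⟨hg', _, hBf', hVp'⟩ => ?_⟩
    have hsum : g' + Bf' = g + Bf := LinearMap.graph_inj.1 (((hset g' Bf').1 hVp').symm.trans hVp)
    refine Prod.ext ?_ ?_
    · rw [← LinearMap.symmPart_add_eq hg' hBf', hsum, LinearMap.symmPart_add_eq hg hBf]
    · rw [← LinearMap.skewPart_add_eq hg' hBf', hsum, LinearMap.skewPart_add_eq hg hBf]
  · intro g Bf hg _ hBf hVp
    rw [(hset g Bf).1 hVp, orthogonal_canonPairing_graph, LinearMap.neg_flip_add_eq hg hBf]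
    exact (-g + Bf).coe_graph

/-- Generalized metrics on `V ⊕ V*` are exactly the graphs
`{(X, g(X,·) + B(X,·))}` of a positive definite symmetric `g` and an antisymmetric `B`;
the pair `(g,B)` is unique; the orthogonal complement is `{(X, −g(X,·) + B(X,·))}`. -/
theorem genMetric_on_double_iff
    {V : Type*} [AddCommGroup V] [Module ℝ V] [FiniteDimensional ℝ V]
    (Vp : Submodule ℝ (V × Module.Dual ℝ V)) :
    (IsGenMetric (canonPairing V) Vp ↔
      ∃ g Bf : V →ₗ[ℝ] V →ₗ[ℝ] ℝ,
        (∀ X Y : V, g X Y = g Y X) ∧ (∀ X : V, X ≠ 0 → 0 < g X X) ∧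
        (∀ X Y : V, Bf X Y = - Bf Y X) ∧
        (Vp : Set (V × Module.Dual ℝ V)) = { p | ∃ X : V, p = (X, g X + Bf X) }) ∧
    (IsGenMetric (canonPairing V) Vp →
      ∃! gB : (V →ₗ[ℝ] V →ₗ[ℝ] ℝ) × (V →ₗ[ℝ] V →ₗ[ℝ] ℝ),
        (∀ X Y : V, gB.1 X Y = gB.1 Y X) ∧ (∀ X : V, X ≠ 0 → 0 < gB.1 X X) ∧
        (∀ X Y : V, gB.2 X Y = - gB.2 Y X) ∧
        (Vp : Set (V × Module.Dual ℝ V)) = { p | ∃ X : V, p = (X, gB.1 X + gB.2 X) }) ∧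
    (∀ g Bf : V →ₗ[ℝ] V →ₗ[ℝ] ℝ,
      (∀ X Y : V, g X Y = g Y X) → (∀ X : V, X ≠ 0 → 0 < g X X) →
      (∀ X Y : V, Bf X Y = - Bf Y X) →
      (Vp : Set (V × Module.Dual ℝ V)) = { p | ∃ X : V, p = (X, g X + Bf X) } →
      ((LinearMap.BilinForm.orthogonal (canonPairing V) Vp : Submodule ℝ _) : Set (V × Module.Dual ℝ V))
        = { p | ∃ X : V, p = (X, - g X + Bf X) }) :=
  genMetric_on_double_iff_general Vp
end

section
/- A subspace V₊ ⊆ E = V ⊕ W ⊕ V* is a generalized metric if and only if there exist a positive-definite symmetric bilinear form g on V, an antisymmetric bilinear form B on V, and a linear map ϑ : V → W such that V₊ = { (X, −ϑ(X), g(X,·) + B(X,·) − (1/2)·⟨ϑ(X), ϑ(·)⟩_W) : X ∈ V }. Moreover, the triple (g, B, ϑ) is uniquely determined by V₊. -/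
/-- The symmetric pairing `⟨(X,Φ,ξ),(Y,Ψ,η)⟩ = η(X) + ξ(Y) + ⟨Φ,Ψ⟩_W` on
`V ⊕ W ⊕ V*`, for a given symmetric bilinear form `cW` on `W`. -/
def hetPairing {V W : Type*} [AddCommGroup V] [Module ℝ V] [AddCommGroup W] [Module ℝ W]
    (cW : W →ₗ[ℝ] W →ₗ[ℝ] ℝ) :
    (V × W × Module.Dual ℝ V) →ₗ[ℝ] (V × W × Module.Dual ℝ V) →ₗ[ℝ] ℝ :=
  LinearMap.mk₂ ℝ (fun p q => q.2.2 p.1 + p.2.2 q.1 + cW p.2.1 q.2.1)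
    (by intro p p' q; simp; ring)
    (by intro c p q; simp; ring)
    (by intro p q q'; simp; ring)
    (by intro c p q; simp; ring)

lemma LinearMap.graph_injective {R M M₂ : Type*} [Semiring R] [AddCommMonoid M]
    [AddCommMonoid M₂] [Module R M] [Module R M₂] :
    Function.Injective (LinearMap.graph : (M →ₗ[R] M₂) → Submodule R (M × M₂)) := by
  intro f f' h
  ext x
  have hx : (x, f x) ∈ f'.graph := h ▸ (LinearMap.mem_graph_iff f _).2 rfl
  simpa [eq_comm] using (LinearMap.mem_graph_iff f' _).1 hx

section PosDefOn

variable {E : Type*} [AddCommGroup E] [Module ℝ E] {B : E →ₗ[ℝ] E →ₗ[ℝ] ℝ} {P N : Submodule ℝ E}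

lemma IsPosDefOn.apply_self_nonneg (hP : IsPosDefOn B P) {x : E} (hx : x ∈ P) : 0 ≤ B x x := by
  rcases eq_or_ne x 0 with rfl | hx0
  · simp
  · exact (hP x hx hx0).le

lemma IsPosDefOn.disjoint_of_nonpos (hP : IsPosDefOn B P) (hN : ∀ x ∈ N, B x x ≤ 0) :
    Disjoint P N :=
  Submodule.disjoint_def.2 fun x hxP hxN ↦
    by_contra fun hx0 ↦ (hN x hxN).not_gt (hP x hxP hx0)

lemma IsPosDefOn.sup_span_singleton_s7 (hP : IsPosDefOn B P) {q : E}
    (hPq : ∀ p ∈ P, B p q = 0) (hqP : ∀ p ∈ P, B q p = 0) (hq : 0 < B q q) :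
    IsPosDefOn B (P ⊔ Submodule.span ℝ {q}) := by
  intro r hr hr0
  obtain ⟨p, hp, _, ht, rfl⟩ := Submodule.mem_sup.1 hr
  obtain ⟨t, rfl⟩ := Submodule.mem_span_singleton.1 ht
  have hexpand : B (p + t • q) (p + t • q) = B p p + t ^ 2 * B q q := by
    simp only [map_add, map_smul, LinearMap.add_apply, LinearMap.smul_apply, smul_eq_mul,
      hPq p hp, hqP p hp]
    ring
  rw [hexpand]
  rcases eq_or_ne t 0 with rfl | ht0
  · simpa using hP p hp (by simpa using hr0)
  · have := hP.apply_self_nonneg hp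
    positivity

lemma IsGenMetric.mem_of_orthogonal (h : IsGenMetric B P) {q : E}
    (hPq : ∀ p ∈ P, B p q = 0) (hqP : ∀ p ∈ P, B q p = 0) (hq : 0 < B q q) : q ∈ P := by
  rw [← h.2 _ le_sup_left (h.1.sup_span_singleton_s7 hPq hqP hq)]
  exact Submodule.mem_sup_right (Submodule.mem_span_singleton_self q)

lemma IsPosDefOn.isGenMetric_of_codisjoint (hP : IsPosDefOn B P) (hPN : Codisjoint P N)
    (hN : ∀ x ∈ N, B x x ≤ 0) : IsGenMetric B P := by
  refine ⟨hP, fun P' hPP' hP' ↦ le_antisymm (fun r hr ↦ ?_) hPP'⟩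
  obtain ⟨p, n, hp, hn, rfl⟩ := Submodule.codisjoint_iff_exists_add_eq.1 hPN r
  have hnP' : n ∈ P' := by
    simpa using P'.sub_mem hr (hPP' hp)
  have hn0 : n = 0 := Submodule.disjoint_def.1 (hP'.disjoint_of_nonpos hN) n hnP' hn
  simpa [hn0] using hp

end PosDefOn

section Heterotic

variable {V W : Type*} [AddCommGroup V] [Module ℝ V] [AddCommGroup W] [Module ℝ W]
  (cW : W →ₗ[ℝ] W →ₗ[ℝ] ℝ)

lemma hetPairing_apply (p q : V × W × Module.Dual ℝ V) :
    hetPairing cW p q = q.2.2 p.1 + p.2.2 q.1 + cW p.2.1 q.2.1 := rfl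

variable {cW}

lemma hetPairing_self_nonpos_of_mem_ker_fst (hcWneg : ∀ x : W, x ≠ 0 → cW x x < 0)
    {p : V × W × Module.Dual ℝ V} (hp : p ∈ LinearMap.ker (LinearMap.fst ℝ V _)) :
    hetPairing cW p p ≤ 0 := by
  rw [LinearMap.mem_ker, LinearMap.fst_apply] at hp
  rw [hetPairing_apply, hp]
  rcases eq_or_ne p.2.1 0 with h | h
  · simp [h]
  · simpa using (hcWneg _ h).le

lemma IsPosDefOn.fst_injective (hcWneg : ∀ x : W, x ≠ 0 → cW x x < 0)
    {Vp : Submodule ℝ (V × W × Module.Dual ℝ V)} (h : IsPosDefOn (hetPairing cW) Vp) :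
    Function.Injective (Prod.fst ∘ Vp.subtype) := by
  intro a b hab
  have hdisj := h.disjoint_of_nonpos fun _ ↦ hetPairing_self_nonpos_of_mem_ker_fst hcWneg
  rw [← sub_eq_zero, ← Submodule.coe_eq_zero]
  refine Submodule.disjoint_def.1 hdisj _ (a - b).2 ?_
  simpa [sub_eq_zero] using hab

lemma IsGenMetric.fst_surjective (hcWneg : ∀ x : W, x ≠ 0 → cW x x < 0)
    {Vp : Submodule ℝ (V × W × Module.Dual ℝ V)} (h : IsGenMetric (hetPairing cW) Vp) :
    Function.Surjective (Prod.fst ∘ Vp.subtype) := by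
  let π := LinearMap.fst ℝ V (W × Module.Dual ℝ V) ∘ₗ Vp.subtype
  let e := LinearEquiv.ofInjective π (h.1.fst_injective hcWneg)
  intro Y
  by_contra hY
  replace hY : Y ∉ LinearMap.range π := fun ⟨p, hp⟩ ↦ hY ⟨p, hp⟩
  let ψ : Vp →ₗ[ℝ] ℝ := -(Module.Dual.eval ℝ V Y ∘ₗ LinearMap.snd ℝ W _ ∘ₗ
    LinearMap.snd ℝ V _ ∘ₗ Vp.subtype)
  obtain ⟨η, hηπ, hηY⟩ := LinearMap.exists_extend_of_notMem (ψ ∘ₗ e.symm.toLinearMap) hY 1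
  have hηp : ∀ p ∈ Vp, η p.1 = -p.2.2 Y := fun p hp ↦
    (LinearMap.congr_fun hηπ (e ⟨p, hp⟩)).trans (by simp [ψ])
  have horth : ∀ p ∈ Vp, hetPairing cW p (Y, 0, η) = 0 := fun p hp ↦ by
    simp [hetPairing_apply, hηp p hp]
  have horth' : ∀ p ∈ Vp, hetPairing cW (Y, 0, η) p = 0 := fun p hp ↦ by
    simp [hetPairing_apply, hηp p hp]
  have hq : hetPairing cW (Y, 0, η) (Y, 0, η) = 2 := by
    simp [hetPairing_apply, hηY]; norm_num
  exact hY ⟨⟨_, h.mem_of_orthogonal horth horth' (by rw [hq]; norm_num)⟩, rfl⟩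

theorem isGenMetric_hetPairing_iff (hcWneg : ∀ x : W, x ≠ 0 → cW x x < 0)
    (Vp : Submodule ℝ (V × W × Module.Dual ℝ V)) :
    IsGenMetric (hetPairing cW) Vp ↔ ∃ f : V →ₗ[ℝ] W × Module.Dual ℝ V,
      Vp = f.graph ∧ ∀ X : V, X ≠ 0 → 0 < hetPairing cW (X, f X) (X, f X) := by
  constructor
  · intro h
    obtain ⟨f, rfl⟩ := Submodule.exists_eq_graph
      ⟨h.1.fst_injective hcWneg, h.fst_surjective hcWneg⟩
    exact ⟨f, rfl, fun X hX ↦ h.1 _ ((LinearMap.mem_graph_iff _ _).2 rfl) (by simp [hX])⟩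
  · rintro ⟨f, rfl, hf⟩
    have hpos : IsPosDefOn (hetPairing cW) f.graph := by
      rintro ⟨X, y⟩ hXy hXy0
      obtain rfl : y = f X := (LinearMap.mem_graph_iff _ _).1 hXy
      exact hf X fun hX ↦ hXy0 (by simp [hX])
    refine hpos.isGenMetric_of_codisjoint (N := LinearMap.ker (LinearMap.fst ℝ V _)) ?_
      fun _ ↦ hetPairing_self_nonpos_of_mem_ker_fst hcWneg
    refine Submodule.codisjoint_iff_exists_add_eq.2 fun ⟨X, y⟩ ↦ ⟨(X, f X), (0, y - f X), ?_⟩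
    simp [LinearMap.mem_graph_iff]

end Heterotic

lemma eq_and_eq_of_symm_add_antisymm_eq {M : Type*} [AddCommGroup M] [Module ℝ M]
    {g g' B B' : M →ₗ[ℝ] M →ₗ[ℝ] ℝ}
    (hg : ∀ X Y, g X Y = g Y X) (hg' : ∀ X Y, g' X Y = g' Y X)
    (hB : ∀ X Y, B X Y = -B Y X) (hB' : ∀ X Y, B' X Y = -B' Y X) (h : g + B = g' + B') :
    g = g' ∧ B = B' := by
  have hXY (X Y : M) : g X Y + B X Y = g' X Y + B' X Y := by
    simpa using LinearMap.congr_fun₂ h X Y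
  constructor <;> ext X Y <;>
    linarith [hXY X Y, hXY Y X, hg X Y, hg' X Y, hB X Y, hB' X Y]

section HeteroticMap

variable {V W : Type*} [AddCommGroup V] [Module ℝ V] [AddCommGroup W] [Module ℝ W]
  (cW : W →ₗ[ℝ] W →ₗ[ℝ] ℝ)

noncomputable def heteroticMap (g B : V →ₗ[ℝ] V →ₗ[ℝ] ℝ) (ϑ : V →ₗ[ℝ] W) :
    V →ₗ[ℝ] W × Module.Dual ℝ V :=
  (-ϑ).prod (g + B - (2 : ℝ)⁻¹ • cW.compl₁₂ ϑ ϑ)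

variable {cW} {g B : V →ₗ[ℝ] V →ₗ[ℝ] ℝ} {ϑ : V →ₗ[ℝ] W}

lemma heteroticMap_apply (X : V) :
    heteroticMap cW g B ϑ X = (-ϑ X, g X + B X - (2 : ℝ)⁻¹ • (cW (ϑ X) ∘ₗ ϑ)) :=
  rfl

lemma coe_graph_heteroticMap :
    ((heteroticMap cW g B ϑ).graph : Set (V × W × Module.Dual ℝ V)) =
      {p | ∃ X : V, p = (X, -ϑ X, g X + B X - (2 : ℝ)⁻¹ • (cW (ϑ X) ∘ₗ ϑ))} := by
  ext ⟨X, y⟩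
  simp [LinearMap.mem_graph_iff, heteroticMap_apply]

lemma hetPairing_heteroticMap_self (hB : ∀ X Y, B X Y = -B Y X) (X : V) :
    hetPairing cW (X, heteroticMap cW g B ϑ X) (X, heteroticMap cW g B ϑ X) = 2 * g X X := by
  have hBXX : B X X = 0 := by linarith [hB X X]
  simp [hetPairing_apply, heteroticMap_apply, hBXX]
  ring

lemma exists_heteroticMap_eq (f : V →ₗ[ℝ] W × Module.Dual ℝ V) :
    ∃ (g B : V →ₗ[ℝ] V →ₗ[ℝ] ℝ) (ϑ : V →ₗ[ℝ] W), (∀ X Y, g X Y = g Y X) ∧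
      (∀ X Y, B X Y = -B Y X) ∧ heteroticMap cW g B ϑ = f := by
  set ϑ := -(LinearMap.fst ℝ W _ ∘ₗ f)
  set τ := LinearMap.snd ℝ W _ ∘ₗ f + (2 : ℝ)⁻¹ • cW.compl₁₂ ϑ ϑ
  refine ⟨(2 : ℝ)⁻¹ • (τ + τ.flip), (2 : ℝ)⁻¹ • (τ - τ.flip), ϑ, fun X Y ↦ ?_, fun X Y ↦ ?_, ?_⟩
  · simp only [LinearMap.smul_apply, LinearMap.add_apply, LinearMap.flip_apply]
    rw [add_comm]
  · simp only [LinearMap.smul_apply, LinearMap.sub_apply, LinearMap.flip_apply, ← smul_neg,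
      neg_sub]
  · ext X Y
    · simp [heteroticMap_apply, ϑ]
    · simp [heteroticMap_apply, τ]
      ring

lemma heteroticMap_inj {g' B' : V →ₗ[ℝ] V →ₗ[ℝ] ℝ} {ϑ' : V →ₗ[ℝ] W}
    (hg : ∀ X Y, g X Y = g Y X) (hg' : ∀ X Y, g' X Y = g' Y X)
    (hB : ∀ X Y, B X Y = -B Y X) (hB' : ∀ X Y, B' X Y = -B' Y X)
    (h : heteroticMap cW g B ϑ = heteroticMap cW g' B' ϑ') :
    g = g' ∧ B = B' ∧ ϑ = ϑ' := by
  have hϑ : ϑ = ϑ' := by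
    ext X
    simpa [heteroticMap_apply] using congr_arg Prod.fst (LinearMap.congr_fun h X)
  subst hϑ
  have hgB : g + B = g' + B' := LinearMap.ext fun X ↦ by
    simpa [heteroticMap_apply] using congr_arg Prod.snd (LinearMap.congr_fun h X)
  obtain ⟨rfl, rfl⟩ := eq_and_eq_of_symm_add_antisymm_eq hg hg' hB hB' hgB
  exact ⟨rfl, rfl, rfl⟩

theorem isGenMetric_hetPairing_iff_exists_heteroticMap
    (hcWneg : ∀ x : W, x ≠ 0 → cW x x < 0) (Vp : Submodule ℝ (V × W × Module.Dual ℝ V)) :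
    IsGenMetric (hetPairing cW) Vp ↔ ∃ (g B : V →ₗ[ℝ] V →ₗ[ℝ] ℝ) (ϑ : V →ₗ[ℝ] W),
      (∀ X Y, g X Y = g Y X) ∧ (∀ X : V, X ≠ 0 → 0 < g X X) ∧ (∀ X Y, B X Y = -B Y X) ∧
      Vp = (heteroticMap cW g B ϑ).graph := by
  rw [isGenMetric_hetPairing_iff hcWneg]
  constructor
  · rintro ⟨f, rfl, hf⟩
    obtain ⟨g, B, ϑ, hg, hB, rfl⟩ := exists_heteroticMap_eq (cW := cW) f
    refine ⟨g, B, ϑ, hg, fun X hX ↦ ?_, hB, rfl⟩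
    have := hf X hX
    rw [hetPairing_heteroticMap_self hB] at this
    linarith
  · rintro ⟨g, B, ϑ, -, hg, hB, rfl⟩
    exact ⟨_, rfl, fun X hX ↦ by rw [hetPairing_heteroticMap_self hB]; linarith [hg X hX]⟩

end HeteroticMap

theorem genMetric_on_heterotic_iff_general
    {V W : Type*} [AddCommGroup V] [Module ℝ V]
    [AddCommGroup W] [Module ℝ W]
    (cW : W →ₗ[ℝ] W →ₗ[ℝ] ℝ)
    (hcWneg : ∀ x : W, x ≠ 0 → cW x x < 0)
    (Vp : Submodule ℝ (V × W × Module.Dual ℝ V)) :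
    (IsGenMetric (hetPairing cW) Vp ↔
      ∃ (g Bf : V →ₗ[ℝ] V →ₗ[ℝ] ℝ) (ϑ : V →ₗ[ℝ] W),
        (∀ X Y : V, g X Y = g Y X) ∧ (∀ X : V, X ≠ 0 → 0 < g X X) ∧
        (∀ X Y : V, Bf X Y = - Bf Y X) ∧
        (Vp : Set (V × W × Module.Dual ℝ V)) =
          { p | ∃ X : V, p = (X, - ϑ X, g X + Bf X - (2 : ℝ)⁻¹ • ((cW (ϑ X)) ∘ₗ ϑ)) }) ∧
    (IsGenMetric (hetPairing cW) Vp →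
      ∃! gBϑ : (V →ₗ[ℝ] V →ₗ[ℝ] ℝ) × (V →ₗ[ℝ] V →ₗ[ℝ] ℝ) × (V →ₗ[ℝ] W),
        (∀ X Y : V, gBϑ.1 X Y = gBϑ.1 Y X) ∧ (∀ X : V, X ≠ 0 → 0 < gBϑ.1 X X) ∧
        (∀ X Y : V, gBϑ.2.1 X Y = - gBϑ.2.1 Y X) ∧
        (Vp : Set (V × W × Module.Dual ℝ V)) =
          { p | ∃ X : V, p = (X, - gBϑ.2.2 X,
              gBϑ.1 X + gBϑ.2.1 X - (2 : ℝ)⁻¹ • ((cW (gBϑ.2.2 X)) ∘ₗ gBϑ.2.2)) }) := by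
  simp only [← coe_graph_heteroticMap, SetLike.coe_set_eq]
  have hiff := isGenMetric_hetPairing_iff_exists_heteroticMap hcWneg Vp
  refine ⟨hiff, fun h ↦ ?_⟩
  obtain ⟨g, B, ϑ, hg, hgpos, hB, hVp⟩ := hiff.1 h
  refine ⟨(g, B, ϑ), ⟨hg, hgpos, hB, hVp⟩, ?_⟩
  rintro ⟨g', B', ϑ'⟩ ⟨hg', -, hB', hVp'⟩
  obtain ⟨rfl, rfl, rfl⟩ :=
    heteroticMap_inj hg' hg hB' hB (LinearMap.graph_injective (hVp'.symm.trans hVp))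
  rfl

/-- A subspace `V₊ ⊆ V ⊕ W ⊕ V*` is a generalized metric iff it is the
graph `{(X, −ϑ(X), g(X,·) + B(X,·) − (1/2)⟨ϑ(X),ϑ(·)⟩_W)}` for a positive-definite
symmetric `g`, an antisymmetric `B` and a linear map `ϑ : V → W`; moreover the triple
`(g,B,ϑ)` is uniquely determined by `V₊`. -/
theorem genMetric_on_heterotic_iff
    {V W : Type*} [AddCommGroup V] [Module ℝ V] [FiniteDimensional ℝ V]
    [AddCommGroup W] [Module ℝ W] [FiniteDimensional ℝ W]
    (cW : W →ₗ[ℝ] W →ₗ[ℝ] ℝ)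
    (hcWsymm : ∀ x y : W, cW x y = cW y x)
    (hcWneg : ∀ x : W, x ≠ 0 → cW x x < 0)
    (Vp : Submodule ℝ (V × W × Module.Dual ℝ V)) :
    (IsGenMetric (hetPairing cW) Vp ↔
      ∃ (g Bf : V →ₗ[ℝ] V →ₗ[ℝ] ℝ) (ϑ : V →ₗ[ℝ] W),
        (∀ X Y : V, g X Y = g Y X) ∧ (∀ X : V, X ≠ 0 → 0 < g X X) ∧
        (∀ X Y : V, Bf X Y = - Bf Y X) ∧
        (Vp : Set (V × W × Module.Dual ℝ V)) =
          { p | ∃ X : V, p = (X, - ϑ X, g X + Bf X - (2 : ℝ)⁻¹ • ((cW (ϑ X)) ∘ₗ ϑ)) }) ∧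
    (IsGenMetric (hetPairing cW) Vp →
      ∃! gBϑ : (V →ₗ[ℝ] V →ₗ[ℝ] ℝ) × (V →ₗ[ℝ] V →ₗ[ℝ] ℝ) × (V →ₗ[ℝ] W),
        (∀ X Y : V, gBϑ.1 X Y = gBϑ.1 Y X) ∧ (∀ X : V, X ≠ 0 → 0 < gBϑ.1 X X) ∧
        (∀ X Y : V, gBϑ.2.1 X Y = - gBϑ.2.1 Y X) ∧
        (Vp : Set (V × W × Module.Dual ℝ V)) =
          { p | ∃ X : V, p = (X, - gBϑ.2.2 X,
              gBϑ.1 X + gBϑ.2.1 X - (2 : ℝ)⁻¹ • ((cW (gBϑ.2.2 X)) ∘ₗ gBϑ.2.2)) }) :=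
  genMetric_on_heterotic_iff_general cW hcWneg Vp
end
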